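/- arXiv:1808.05677 — 2 statements merged into one kernel-verified Lean document; each statement's English description precedes it below -/
import Mathlib

section
/- With ξ as above and additionally Eθ_1² < 1 and Eθ_1³ < 1, assuming the θ_i are symmetric about 1/2, the third moment satisfies Eξ³ = 3v³ / (2β³ (1 − Eθ_1²)(1 − Eθ_1³)). -/
/-!
Write `S_r^N = ∑_{n<N} τ_{r+n} θ_{r+1} ⋯ θ_{r+n}` for the partial sums of the series for `ξ / v`
started at index `r`. Then `S_r^{N+1} = τ_r + θ_{r+1} S_{r+1}^N` with the three factors
independent, so the binomial theorem expresses `E (S_r^{N+1})^k` through the moments of `τ`, of `θ`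
and of `S_{r+1}^N` of order at most `k`; by induction on `N` these moments do not depend on `r`.
For `k = 1, 2, 3` this gives linear recursions `m_k(N+1) = u_k(N) + Eθ^k m_k(N)` whose limits are
explicit because `Eθ^k < 1`, and monotone convergence identifies the limit of `E (S_0^N)^3` with
`E (ξ / v)^3`; finiteness of that limit is also what makes the series converge almost surely.
-/

open MeasureTheory ProbabilityTheory Real Filter
open scoped Topology ENNReal

lemma abs_sub_le_of_linear_recurrence {q U L η : ℝ} (hq0 : 0 ≤ q) (hq1 : q < 1)
    (hL : L = U + q * L) {u x : ℕ → ℝ} (hx : ∀ n, x (n + 1) = u n + q * x n) {N : ℕ}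
    (hu : ∀ n ≥ N, |u n - U| ≤ η) (k : ℕ) :
    |x (N + k) - L| ≤ q ^ k * |x N - L| + η / (1 - q) := by
  have hq : 0 < 1 - q := by linarith
  have hη : 0 ≤ η := (abs_nonneg _).trans (hu N le_rfl)
  induction k with
  | zero => simpa using div_nonneg hη hq.le
  | succ k ih =>
    calc |x (N + (k + 1)) - L| = |(u (N + k) - U) + q * (x (N + k) - L)| := by
          rw [← add_assoc, hx]; congr 1; linarith
      _ ≤ η + q * (q ^ k * |x N - L| + η / (1 - q)) := by
          refine (abs_add_le _ _).trans (add_le_add (hu _ (Nat.le_add_right N k)) ?_)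
          rw [abs_mul, abs_of_nonneg hq0]
          exact mul_le_mul_of_nonneg_left ih hq0
      _ = q ^ (k + 1) * |x N - L| + η / (1 - q) := by field_simp; ring

lemma tendsto_of_linear_recurrence {q U : ℝ} (hq0 : 0 ≤ q) (hq1 : q < 1) {u x : ℕ → ℝ}
    (hu : Tendsto u atTop (𝓝 U)) (hx : ∀ n, x (n + 1) = u n + q * x n) :
    Tendsto x atTop (𝓝 (U / (1 - q))) := by
  have hq : 0 < 1 - q := by linarith
  have hL : U / (1 - q) = U + q * (U / (1 - q)) := by field_simp; ring
  rw [Metric.tendsto_atTop]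
  intro ε hε
  obtain ⟨N, hN⟩ := Metric.tendsto_atTop.1 hu (ε * (1 - q) / 2) (by positivity)
  obtain ⟨K, hK⟩ : ∃ K, q ^ K * |x N - U / (1 - q)| < ε / 2 :=
    (((tendsto_pow_atTop_nhds_zero_of_lt_one hq0 hq1).mul_const _).eventually
      (gt_mem_nhds (by simpa using half_pos hε))).exists
  refine ⟨N + K, fun n hn => ?_⟩
  obtain ⟨k, rfl⟩ := Nat.exists_eq_add_of_le (le_of_add_le_left hn)
  have hbound := abs_sub_le_of_linear_recurrence hq0 hq1 hL hx
    (fun n hn => (hN n hn).le) k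
  have hqk : q ^ k ≤ q ^ K := pow_le_pow_of_le_one hq0 hq1.le (by omega)
  rw [Real.dist_eq]
  calc |x (N + k) - U / (1 - q)| ≤ q ^ K * |x N - U / (1 - q)| + ε / 2 := by
        refine hbound.trans (add_le_add (mul_le_mul_of_nonneg_right hqk (abs_nonneg _)) ?_)
        exact (by field_simp : ε * (1 - q) / 2 / (1 - q) = ε / 2).le
    _ < ε := by linarith

section ExponentialTail

variable {Ω : Type*} [MeasurableSpace Ω] {P : Measure Ω} [IsProbabilityMeasure P]
  {X : Ω → ℝ} {r : ℝ}

lemma ae_pos_of_exp_tail (hX : Measurable X)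
    (htail : ∀ t, 0 ≤ t → P {ω | X ω > t} = ENNReal.ofReal (exp (-r * t))) :
    ∀ᵐ ω ∂P, 0 < X ω := by
  have hnull : P {ω | X ω > 0}ᶜ = 0 := by
    rw [prob_compl_eq_one_sub (measurableSet_lt measurable_const hX), htail 0 le_rfl]
    simp
  exact measure_mono_null (fun ω hω => by simpa using hω) hnull

lemma lintegral_ofReal_rpow_of_exp_tail (hr : 0 < r) (hX : Measurable X)
    (htail : ∀ t, 0 ≤ t → P {ω | X ω > t} = ENNReal.ofReal (exp (-r * t)))
    {p : ℝ} (hp : 0 < p) :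
    ∫⁻ ω, ENNReal.ofReal (X ω ^ p) ∂P = ENNReal.ofReal (Gamma (p + 1) / r ^ p) := by
  have hX0 : 0 ≤ᵐ[P] X := (ae_pos_of_exp_tail hX htail).mono fun ω hω => hω.le
  have hdensity : IntegrableOn (fun t : ℝ => t ^ (p - 1) * exp (-(r * t))) (Set.Ioi 0) := by
    simpa using integrableOn_rpow_mul_exp_neg_mul_rpow (by linarith : -1 < p - 1) one_pos hr
  rw [lintegral_rpow_eq_lintegral_meas_lt_mul P hX0 hX.aemeasurable hp,
    setLIntegral_congr_fun measurableSet_Ioi (g := fun t => ENNReal.ofReal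
      (t ^ (p - 1) * exp (-(r * t)))) (fun t ht => by
        rw [htail t (le_of_lt ht), ← ENNReal.ofReal_mul (exp_pos _).le, neg_mul, mul_comm]),
    ← ofReal_integral_eq_lintegral_ofReal hdensity
      (ae_restrict_of_forall_mem measurableSet_Ioi fun t ht =>
        mul_nonneg (rpow_nonneg (le_of_lt ht) _) (exp_pos _).le),
    integral_rpow_mul_exp_neg_mul_Ioi hp hr, ← ENNReal.ofReal_mul hp.le, Gamma_add_one hp.ne',
    div_rpow zero_le_one hr.le, one_rpow]
  ring_nf

lemma integrable_pow_of_exp_tail (hr : 0 < r) (hX : Measurable X)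
    (htail : ∀ t, 0 ≤ t → P {ω | X ω > t} = ENNReal.ofReal (exp (-r * t))) (n : ℕ) :
    Integrable (fun ω => X ω ^ n) P := by
  rcases n.eq_zero_or_pos with rfl | hn
  · simp
  refine ⟨(hX.pow_const n).aestronglyMeasurable, ?_⟩
  rw [hasFiniteIntegral_iff_ofReal]
  · simpa [← rpow_natCast] using (lintegral_ofReal_rpow_of_exp_tail hr hX htail
      (Nat.cast_pos.2 hn)).trans_lt ENNReal.ofReal_lt_top
  · exact (ae_pos_of_exp_tail hX htail).mono fun ω hω => pow_nonneg hω.le n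

lemma integral_pow_of_exp_tail (hr : 0 < r) (hX : Measurable X)
    (htail : ∀ t, 0 ≤ t → P {ω | X ω > t} = ENNReal.ofReal (exp (-r * t))) (n : ℕ) :
    ∫ ω, X ω ^ n ∂P = n.factorial / r ^ n := by
  rcases n.eq_zero_or_pos with rfl | hn
  · simp
  rw [integral_eq_lintegral_of_nonneg_ae
      ((ae_pos_of_exp_tail hX htail).mono fun ω hω => pow_nonneg hω.le n)
      (hX.pow_const n).aestronglyMeasurable]
  simp_rw [← rpow_natCast]
  rw [lintegral_ofReal_rpow_of_exp_tail hr hX htail (Nat.cast_pos.2 hn),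
    ENNReal.toReal_ofReal (by positivity), Gamma_nat_eq_factorial]

end ExponentialTail

lemma measurable_iSup_comap_of_mem {Ω ι β : Type*} [mβ : MeasurableSpace β] (f : ι → Ω → β)
    {A : Set ι} {i : ι} (hi : i ∈ A) :
    Measurable[⨆ j ∈ A, mβ.comap (f j)] (f i) :=
  Measurable.of_comap_le (le_biSup (fun j => mβ.comap (f j)) hi)

section Independence

variable {Ω : Type*} [MeasurableSpace Ω] {P : Measure Ω}

lemma ProbabilityTheory.iIndepFun.indepFun_of_measurable_iSup {ι β γ γ' : Type*}
    [mβ : MeasurableSpace β] [MeasurableSpace γ] [MeasurableSpace γ'] {f : ι → Ω → β}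
    (hf : ∀ i, Measurable (f i))
    (h : iIndepFun f P) {A B : Set ι} (hAB : Disjoint A B) {X : Ω → γ} {Y : Ω → γ'}
    (hX : Measurable[⨆ i ∈ A, mβ.comap (f i)] X) (hY : Measurable[⨆ i ∈ B, mβ.comap (f i)] Y) :
    IndepFun X Y P :=
  indep_of_indep_of_le_left
    (indep_of_indep_of_le_right
      (indep_iSup_of_disjoint (fun i => (hf i).comap_le) h hAB) hY.comap_le) hX.comap_le

variable {X Y Z : Ω → ℝ}

lemma integral_pow_mul_pow_mul_pow_of_indepFun
    (hXYZ : IndepFun X (fun ω => (Y ω, Z ω)) P) (hYZ : IndepFun Y Z P)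
    (hX : ∀ j, Integrable (fun ω => X ω ^ j) P) (hY : ∀ j, Integrable (fun ω => Y ω ^ j) P)
    (hZ : ∀ j, Integrable (fun ω => Z ω ^ j) P) (i j : ℕ) :
    Integrable (fun ω => X ω ^ i * (Y ω ^ j * Z ω ^ j)) P ∧
      ∫ ω, X ω ^ i * (Y ω ^ j * Z ω ^ j) ∂P
        = (∫ ω, X ω ^ i ∂P) * (∫ ω, Y ω ^ j ∂P) * (∫ ω, Z ω ^ j ∂P) := by
  have hYZj : IndepFun (fun ω => Y ω ^ j) (fun ω => Z ω ^ j) P :=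
    hYZ.comp (measurable_id.pow_const j) (measurable_id.pow_const j)
  have hXYZj : IndepFun (fun ω => X ω ^ i) (fun ω => Y ω ^ j * Z ω ^ j) P :=
    hXYZ.comp (φ := fun x => x ^ i) (ψ := fun p : ℝ × ℝ => p.1 ^ j * p.2 ^ j)
      (measurable_id.pow_const i) ((measurable_fst.pow_const j).mul (measurable_snd.pow_const j))
  have hYZint : Integrable (fun ω => Y ω ^ j * Z ω ^ j) P := hYZj.integrable_mul (hY j) (hZ j)
  refine ⟨hXYZj.integrable_mul (hX i) hYZint, ?_⟩
  rw [hXYZj.integral_fun_mul_eq_mul_integral (hX i).1 hYZint.1,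
    hYZj.integral_fun_mul_eq_mul_integral (hY j).1 (hZ j).1, mul_assoc]

lemma integral_add_mul_pow_of_indepFun
    (hXYZ : IndepFun X (fun ω => (Y ω, Z ω)) P) (hYZ : IndepFun Y Z P)
    (hX : ∀ j, Integrable (fun ω => X ω ^ j) P) (hY : ∀ j, Integrable (fun ω => Y ω ^ j) P)
    (hZ : ∀ j, Integrable (fun ω => Z ω ^ j) P) (k : ℕ) :
    Integrable (fun ω => (X ω + Y ω * Z ω) ^ k) P ∧
      ∫ ω, (X ω + Y ω * Z ω) ^ k ∂P = ∑ j ∈ Finset.range (k + 1),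
        (∫ ω, X ω ^ j ∂P) * (∫ ω, Y ω ^ (k - j) ∂P) * (∫ ω, Z ω ^ (k - j) ∂P) * k.choose j := by
  have hterm := integral_pow_mul_pow_mul_pow_of_indepFun hXYZ hYZ hX hY hZ
  have hexpand : (fun ω => (X ω + Y ω * Z ω) ^ k) = fun ω => ∑ j ∈ Finset.range (k + 1),
      X ω ^ j * (Y ω ^ (k - j) * Z ω ^ (k - j)) * k.choose j := by
    ext ω; rw [add_pow]; simp only [mul_pow]
  rw [hexpand]
  refine ⟨integrable_finsetSum _ fun j _ => (hterm j (k - j)).1.mul_const _, ?_⟩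
  rw [integral_finsetSum _ fun j _ => (hterm j (k - j)).1.mul_const _]
  simp only [integral_mul_const, (hterm _ _).2]

end Independence

lemma integral_eq_half_of_identDistrib_one_sub {Ω : Type*} [MeasurableSpace Ω] {P : Measure Ω}
    [IsProbabilityMeasure P] {X : Ω → ℝ} (hX : Integrable X P)
    (hsym : IdentDistrib X (fun ω => 1 - X ω) P P) :
    ∫ ω, X ω ∂P = 1 / 2 := by
  have h := hsym.integral_eq
  rw [integral_sub (integrable_const 1) hX, integral_const, probReal_univ, one_smul] at h
  linarith

lemma monotone_pow_sum_range {a : ℕ → ℝ} (ha : ∀ n, 0 ≤ a n) (p : ℕ) :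
    Monotone fun N => (∑ n ∈ Finset.range N, a n) ^ p := fun _ _ hMN =>
  pow_le_pow_left₀ (Finset.sum_nonneg fun n _ => ha n)
    (Finset.sum_le_sum_of_subset_of_nonneg (Finset.range_mono hMN) fun n _ _ => ha n) p

lemma summable_of_iSup_ofReal_pow_sum_range_ne_top {a : ℕ → ℝ} (ha : ∀ n, 0 ≤ a n) {p : ℕ}
    (hp : p ≠ 0) (h : ⨆ N, ENNReal.ofReal ((∑ n ∈ Finset.range N, a n) ^ p) ≠ ∞) :
    Summable a := by
  refine summable_of_sum_range_le ha (c := max 1 (⨆ N, ENNReal.ofReal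
    ((∑ n ∈ Finset.range N, a n) ^ p)).toReal) fun N => ?_
  rcases le_total (∑ n ∈ Finset.range N, a n) 1 with h1 | h1
  · exact h1.trans (le_max_left _ _)
  · refine (le_self_pow₀ h1 hp).trans (le_max_of_le_right ?_)
    rw [← ENNReal.ofReal_le_iff_le_toReal h]
    exact le_iSup (fun N => ENNReal.ofReal ((∑ n ∈ Finset.range N, a n) ^ p)) N

lemma iSup_ofReal_pow_sum_range {a : ℕ → ℝ} (ha : ∀ n, 0 ≤ a n) (hsum : Summable a) (p : ℕ) :
    ⨆ N, ENNReal.ofReal ((∑ n ∈ Finset.range N, a n) ^ p) = ENNReal.ofReal ((∑' n, a n) ^ p) :=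
  tendsto_nhds_unique
    (tendsto_atTop_iSup fun _ _ hMN => ENNReal.ofReal_le_ofReal (monotone_pow_sum_range ha p hMN))
    ((ENNReal.continuous_ofReal.tendsto _).comp (hsum.hasSum.tendsto_sum_nat.pow p))

lemma integral_tsum_pow_of_tendsto {Ω : Type*} [MeasurableSpace Ω] {μ : Measure Ω}
    {a : ℕ → Ω → ℝ} (ha : ∀ n, Measurable (a n)) (ha0 : ∀ᵐ ω ∂μ, ∀ n, 0 ≤ a n ω)
    {p : ℕ} (hp : p ≠ 0) (hint : ∀ N, Integrable (fun ω => (∑ n ∈ Finset.range N, a n ω) ^ p) μ)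
    {L : ℝ} (hL : Tendsto (fun N => ∫ ω, (∑ n ∈ Finset.range N, a n ω) ^ p ∂μ) atTop (𝓝 L)) :
    ∫ ω, (∑' n, a n ω) ^ p ∂μ = L := by
  set s : ℕ → Ω → ℝ := fun N ω => (∑ n ∈ Finset.range N, a n ω) ^ p
  have hs0 : ∀ N, 0 ≤ᵐ[μ] s N := fun N => ha0.mono fun ω hω =>
    pow_nonneg (Finset.sum_nonneg fun n _ => hω n) p
  have hsmono : ∀ᵐ ω ∂μ, Monotone fun N => s N ω :=
    ha0.mono fun ω hω => monotone_pow_sum_range hω p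
  have hlint : ∫⁻ ω, ⨆ N, ENNReal.ofReal (s N ω) ∂μ = ENNReal.ofReal L := by
    rw [lintegral_iSup' (fun N => (hint N).aemeasurable.ennreal_ofReal)
      (hsmono.mono fun ω hω _ _ hMN => ENNReal.ofReal_le_ofReal (hω hMN))]
    simp_rw [← ofReal_integral_eq_lintegral_ofReal (hint _) (hs0 _)]
    exact tendsto_nhds_unique (tendsto_atTop_iSup fun M N hMN => ENNReal.ofReal_le_ofReal
      (integral_mono_ae (hint M) (hint N) (hsmono.mono fun ω hω => hω hMN)))
      ((ENNReal.continuous_ofReal.tendsto L).comp hL)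
  have hsummable : ∀ᵐ ω ∂μ, Summable fun n => a n ω := by
    filter_upwards [ha0, ae_lt_top' (AEMeasurable.iSup fun N =>
      (hint N).aemeasurable.ennreal_ofReal) (hlint ▸ ENNReal.ofReal_ne_top)] with ω hω hωfin
    exact summable_of_iSup_ofReal_pow_sum_range_ne_top hω hp hωfin.ne
  have hmeas : AEMeasurable (fun ω => ∑' n, a n ω) μ :=
    aemeasurable_of_tendsto_metrizable_ae atTop
      (fun N => (Finset.measurable_sum _ fun n _ => ha n).aemeasurable)
      (hsummable.mono fun ω hω => hω.hasSum.tendsto_sum_nat)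
  have hL0 : 0 ≤ L := ge_of_tendsto' hL fun N => integral_nonneg_of_ae (hs0 N)
  rw [integral_eq_lintegral_of_nonneg_ae
    (by filter_upwards [ha0] with ω hω using pow_nonneg (tsum_nonneg hω) p)
    (hmeas.pow_const p).aestronglyMeasurable, ← ENNReal.toReal_ofReal hL0, ← hlint]
  congr 1
  refine lintegral_congr_ae ?_
  filter_upwards [ha0, hsummable] with ω hω hωsum
  exact (iSup_ofReal_pow_sum_range hω hωsum p).symm

section PartialSums

variable {Ω : Type*} (τ θ : ℕ → Ω → ℝ)

def partialSum (r N : ℕ) (ω : Ω) : ℝ :=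
  ∑ n ∈ Finset.range N, τ (r + n) ω * ∏ i ∈ Finset.range n, θ (r + 1 + i) ω

variable {τ θ}

@[simp]
lemma partialSum_zero (r : ℕ) : partialSum τ θ r 0 = 0 := by
  ext ω; simp [partialSum]

lemma partialSum_succ (r N : ℕ) (ω : Ω) :
    partialSum τ θ r (N + 1) ω = τ r ω + θ (r + 1) ω * partialSum τ θ (r + 1) N ω := by
  simp only [partialSum, Finset.sum_range_succ', Finset.prod_range_succ', Finset.mul_sum]
  simp only [add_zero, Finset.prod_range_zero, mul_one]
  rw [add_comm]
  congr 1
  refine Finset.sum_congr rfl fun n _ => ?_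
  simp only [← add_assoc, add_right_comm _ n 1, add_right_comm _ _ 1]
  ring

lemma partialSum_zero_left (N : ℕ) (ω : Ω) :
    partialSum τ θ 0 N ω = ∑ n ∈ Finset.range N, τ n ω * ∏ i ∈ Finset.range n, θ (i + 1) ω := by
  simp only [partialSum, zero_add, add_comm 1]

lemma measurable_iSup_comap_partialSum {A : Set (ℕ ⊕ ℕ)} {r : ℕ}
    (hτA : ∀ j, r ≤ j → Sum.inl j ∈ A) (hθA : ∀ j, r < j → Sum.inr j ∈ A) (N : ℕ) :
    Measurable[⨆ i ∈ A, MeasurableSpace.comap (Sum.elim τ θ i) inferInstance]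
      (partialSum τ θ r N) :=
  Finset.measurable_sum _ fun n _ =>
    (measurable_iSup_comap_of_mem (Sum.elim τ θ) (hτA (r + n) (by omega))).mul
      (Finset.measurable_prod _ fun i _ =>
        measurable_iSup_comap_of_mem (Sum.elim τ θ) (hθA (r + 1 + i) (by omega)))

end PartialSums

section PartialSumMoments

variable {Ω : Type*} [MeasurableSpace Ω] {P : Measure Ω} {τ θ : ℕ → Ω → ℝ}

lemma indepFun_head_partialSum (hτ : ∀ i, Measurable (τ i)) (hθ : ∀ i, Measurable (θ i))
    (hindep : iIndepFun (Sum.elim τ θ) P) (r N : ℕ) :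
    IndepFun (τ r) (fun ω => (θ (r + 1) ω, partialSum τ θ (r + 1) N ω)) P := by
  refine hindep.indepFun_of_measurable_iSup (Sum.forall.2 ⟨hτ, hθ⟩)
    (disjoint_compl_right (a := {Sum.inl r}))
    (measurable_iSup_comap_of_mem _ (Set.mem_singleton _)) (Measurable.prodMk ?_ ?_)
  · exact measurable_iSup_comap_of_mem (Sum.elim τ θ) (i := Sum.inr (r + 1))
      (Set.mem_compl_singleton_iff.2 Sum.inr_ne_inl)
  · exact measurable_iSup_comap_partialSum
      (fun j hj => Set.mem_compl_singleton_iff.2 (Sum.inl_injective.ne (by omega)))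
      (fun j _ => Set.mem_compl_singleton_iff.2 Sum.inr_ne_inl) N

lemma indepFun_factor_partialSum (hτ : ∀ i, Measurable (τ i)) (hθ : ∀ i, Measurable (θ i))
    (hindep : iIndepFun (Sum.elim τ θ) P) (r N : ℕ) :
    IndepFun (θ (r + 1)) (partialSum τ θ (r + 1) N) P :=
  hindep.indepFun_of_measurable_iSup (Sum.forall.2 ⟨hτ, hθ⟩)
    (disjoint_compl_right (a := {Sum.inr (r + 1)}))
    (measurable_iSup_comap_of_mem _ (Set.mem_singleton _))
    (measurable_iSup_comap_partialSum (fun j _ => Set.mem_compl_singleton_iff.2 Sum.inl_ne_inr)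
      (fun j hj => Set.mem_compl_singleton_iff.2 (Sum.inr_injective.ne (by omega))) N)

def partialSumMoment (t c : ℕ → ℝ) : ℕ → ℕ → ℝ
  | 0, k => 0 ^ k
  | N + 1, k => ∑ j ∈ Finset.range (k + 1),
      t j * c (k - j) * partialSumMoment t c N (k - j) * k.choose j

lemma partialSumMoment_zero_right {t c : ℕ → ℝ} (ht : t 0 = 1) (hc : c 0 = 1) (N : ℕ) :
    partialSumMoment t c N 0 = 1 := by
  induction N with
  | zero => simp [partialSumMoment]
  | succ N ih => simp [partialSumMoment, ht, hc, ih]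

lemma tendsto_partialSumMoment_three {t c : ℕ → ℝ} (ht : t 0 = 1) (hc : c 0 = 1)
    (hc' : ∀ k ∈ Finset.Icc 1 3, c k ∈ Set.Ico 0 1) :
    Tendsto (fun N => partialSumMoment t c N 3) atTop
      (𝓝 ((t 3 + 3 * t 2 * c 1 * (t 1 / (1 - c 1)) + 3 * t 1 * c 2 *
        ((t 2 + 2 * t 1 * c 1 * (t 1 / (1 - c 1))) / (1 - c 2))) / (1 - c 3))) := by
  set m := partialSumMoment t c
  have hstep : ∀ N, m (N + 1) 1 = t 1 + c 1 * m N 1 ∧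
      m (N + 1) 2 = t 2 + 2 * t 1 * c 1 * m N 1 + c 2 * m N 2 ∧
      m (N + 1) 3 = t 3 + 3 * t 2 * c 1 * m N 1 + 3 * t 1 * c 2 * m N 2 + c 3 * m N 3 := by
    intro N
    simp only [m, partialSumMoment, Finset.sum_range_succ, Finset.sum_range_zero, Nat.reduceAdd,
      Nat.reduceSub, Nat.choose, Nat.cast_one, partialSumMoment_zero_right ht hc, ht, hc]
    refine ⟨by ring, by ring, by ring⟩
  have hm1 : Tendsto (fun N => m N 1) atTop (𝓝 (t 1 / (1 - c 1))) :=
    tendsto_of_linear_recurrence (hc' 1 (by decide)).1 (hc' 1 (by decide)).2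
      tendsto_const_nhds fun N => (hstep N).1
  have hm2 : Tendsto (fun N => m N 2) atTop
      (𝓝 ((t 2 + 2 * t 1 * c 1 * (t 1 / (1 - c 1))) / (1 - c 2))) :=
    tendsto_of_linear_recurrence (hc' 2 (by decide)).1 (hc' 2 (by decide)).2
      (tendsto_const_nhds.add (hm1.const_mul _)) fun N => (hstep N).2.1
  exact tendsto_of_linear_recurrence (hc' 3 (by decide)).1 (hc' 3 (by decide)).2
    ((tendsto_const_nhds.add (hm1.const_mul _)).add (hm2.const_mul _)) fun N => (hstep N).2.2

variable [IsProbabilityMeasure P]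

lemma integrable_partialSum_pow (hτ : ∀ i, Measurable (τ i)) (hθ : ∀ i, Measurable (θ i))
    (hindep : iIndepFun (Sum.elim τ θ) P) (hτint : ∀ i k, Integrable (fun ω => τ i ω ^ k) P)
    (hθint : ∀ i k, Integrable (fun ω => θ i ω ^ k) P) (N r k : ℕ) :
    Integrable (fun ω => partialSum τ θ r N ω ^ k) P := by
  induction N generalizing r k with
  | zero => simp
  | succ N ih =>
    simp only [partialSum_succ]
    exact (integral_add_mul_pow_of_indepFun (indepFun_head_partialSum hτ hθ hindep r N)
      (indepFun_factor_partialSum hτ hθ hindep r N) (hτint r) (hθint (r + 1)) (ih (r + 1)) k).1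

lemma integral_partialSum_pow {t c : ℕ → ℝ} (hτ : ∀ i, Measurable (τ i))
    (hθ : ∀ i, Measurable (θ i)) (hindep : iIndepFun (Sum.elim τ θ) P)
    (hτint : ∀ i k, Integrable (fun ω => τ i ω ^ k) P)
    (hθint : ∀ i k, Integrable (fun ω => θ i ω ^ k) P)
    (ht : ∀ i k, ∫ ω, τ i ω ^ k ∂P = t k) (hc : ∀ i k, ∫ ω, θ (i + 1) ω ^ k ∂P = c k)
    (N r k : ℕ) :
    ∫ ω, partialSum τ θ r N ω ^ k ∂P = partialSumMoment t c N k := by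
  induction N generalizing r k with
  | zero => simp [partialSumMoment]
  | succ N ih =>
    simp only [partialSum_succ]
    rw [(integral_add_mul_pow_of_indepFun (indepFun_head_partialSum hτ hθ hindep r N)
      (indepFun_factor_partialSum hτ hθ hindep r N) (hτint r) (hθint (r + 1))
      (integrable_partialSum_pow hτ hθ hindep hτint hθint N (r + 1)) k).2]
    simp only [ht, hc, ih, partialSumMoment]

lemma integral_tsum_pow_of_tendsto_partialSumMoment {t c : ℕ → ℝ} (hτ : ∀ i, Measurable (τ i))
    (hθ : ∀ i, Measurable (θ i)) (hindep : iIndepFun (Sum.elim τ θ) P)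
    (hτint : ∀ i k, Integrable (fun ω => τ i ω ^ k) P)
    (hθint : ∀ i k, Integrable (fun ω => θ i ω ^ k) P)
    (ht : ∀ i k, ∫ ω, τ i ω ^ k ∂P = t k) (hc : ∀ i k, ∫ ω, θ (i + 1) ω ^ k ∂P = c k)
    (hτ0 : ∀ᵐ ω ∂P, ∀ n, 0 ≤ τ n ω) (hθ0 : ∀ i ω, 0 ≤ θ i ω) {p : ℕ} (hp : p ≠ 0) {L : ℝ}
    (hL : Tendsto (fun N => partialSumMoment t c N p) atTop (𝓝 L)) :
    ∫ ω, (∑' n, τ n ω * ∏ i ∈ Finset.range n, θ (i + 1) ω) ^ p ∂P = L := by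
  refine integral_tsum_pow_of_tendsto (a := fun n ω => τ n ω * ∏ i ∈ Finset.range n, θ (i + 1) ω)
    (fun n => (hτ n).mul (Finset.measurable_prod _ fun i _ => hθ _))
    (hτ0.mono fun ω hω n => mul_nonneg (hω n) (Finset.prod_nonneg fun i _ => hθ0 _ ω)) hp
    (fun N => ?_) ?_
  · simpa only [partialSum_zero_left] using
      integrable_partialSum_pow hτ hθ hindep hτint hθint N 0 p
  · simp_rw [← partialSum_zero_left, integral_partialSum_pow hτ hθ hindep hτint hθint ht hc]
    exact hL

end PartialSumMoments

theorem third_moment_of_limiting_mass_general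
    {Ω : Type*} [MeasurableSpace Ω] (P : Measure Ω) [IsProbabilityMeasure P]
    (β v δ : ℝ) (hβ : 0 < β) (hδ : 0 < δ)
    (τ θ : ℕ → Ω → ℝ)
    (hτmeas : ∀ i, Measurable (τ i)) (hθmeas : ∀ i, Measurable (θ i))
    (hindep : iIndepFun (Sum.elim τ θ) P)
    (hτdist : ∀ i, ∀ t : ℝ, 0 ≤ t →
      P {ω | τ i ω > t} = ENNReal.ofReal (Real.exp (-(2 * β) * t)))
    (hθid : ∀ i j, IdentDistrib (θ i) (θ j) P P)
    (hθsym : IdentDistrib (θ 1) (fun ω => 1 - θ 1 ω) P P)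
    (hθsq : ∫ ω, (θ 1 ω) ^ 2 ∂P < 1)
    (hθcube : ∫ ω, (θ 1 ω) ^ 3 ∂P < 1)
    (hθrange : ∀ i ω, θ i ω ∈ Set.Icc δ (1 - δ))
    (ξ : Ω → ℝ)
    (hξ : ∀ ω, ξ ω = v * ∑' n : ℕ, τ n ω * ∏ i ∈ Finset.range n, θ (i + 1) ω) :
    ∫ ω, (ξ ω) ^ 3 ∂P
      = 3 * v ^ 3 /
        (2 * β ^ 3 * (1 - ∫ ω, (θ 1 ω) ^ 2 ∂P) * (1 - ∫ ω, (θ 1 ω) ^ 3 ∂P)) := by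
  have h2β : 0 < 2 * β := by positivity
  have hθ01 : ∀ i ω, θ i ω ∈ Set.Icc (0 : ℝ) 1 := fun i ω =>
    ⟨hδ.le.trans (hθrange i ω).1, (hθrange i ω).2.trans (by linarith)⟩
  have hθint : ∀ i k, Integrable (fun ω => θ i ω ^ k) P := fun i k =>
    .of_mem_Icc 0 1 ((hθmeas i).pow_const k).aemeasurable (.of_forall fun ω =>
      ⟨pow_nonneg (hθ01 i ω).1 k, pow_le_one₀ (hθ01 i ω).1 (hθ01 i ω).2⟩)
  have hτint i := integrable_pow_of_exp_tail h2β (hτmeas i) (hτdist i)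
  set t : ℕ → ℝ := fun k => k.factorial / (2 * β) ^ k
  set c : ℕ → ℝ := fun k => ∫ ω, θ 1 ω ^ k ∂P
  have hc1 : c 1 = 1 / 2 := by
    simpa [c] using integral_eq_half_of_identDistrib_one_sub (by simpa using hθint 1 1) hθsym
  have hc : ∀ k ∈ Finset.Icc 1 3, c k ∈ Set.Ico 0 1 := by
    intro k hk
    refine ⟨integral_nonneg fun ω => pow_nonneg (hθ01 1 ω).1 k, ?_⟩
    fin_cases hk
    exacts [hc1.trans_lt (by norm_num), hθsq, hθcube]
  have hseries := integral_tsum_pow_of_tendsto_partialSumMoment (t := t) (c := c)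
    hτmeas hθmeas hindep hτint hθint
    (fun i => integral_pow_of_exp_tail h2β (hτmeas i) (hτdist i))
    (fun i k => ((hθid (i + 1) 1).comp (measurable_id.pow_const k)).integral_eq)
    (ae_all_iff.2 fun n => (ae_pos_of_exp_tail (hτmeas n) (hτdist n)).mono fun _ h => h.le)
    (fun i ω => (hθ01 i ω).1) three_ne_zero
    (tendsto_partialSumMoment_three (by simp [t]) (by simp [c]) hc)
  have h1 : (1 : ℝ) - ∫ ω, θ 1 ω ^ 2 ∂P ≠ 0 := by linarith
  have h2 : (1 : ℝ) - ∫ ω, θ 1 ω ^ 3 ∂P ≠ 0 := by linarith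
  simp_rw [hξ, mul_pow, integral_const_mul, hseries]
  rw [hc1]
  simp only [c, t, Nat.factorial]
  field_simp
  ring

/-- With `ξ = v Σ_{n≥0} τ_n ∏_{i=1}^n θ_i`, where the `τ_i` are i.i.d. `Exp(2β)` and the
`θ_i` are i.i.d. with `Eθ₁ = 1/2` and `Eθ₁² < 1`, all independent, and additionally `Eθ₁² < 1`,
`Eθ₁³ < 1` and the `θ_i` symmetric about `1/2`, the third moment satisfies
`Eξ³ = 3v³ / (2β³ (1 − Eθ₁²)(1 − Eθ₁³))`. -/
theorem third_moment_of_limiting_mass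
    {Ω : Type*} [MeasurableSpace Ω] (P : Measure Ω) [IsProbabilityMeasure P]
    (β v δ : ℝ) (hβ : 0 < β) (hv : 0 < v) (hδ : 0 < δ) (hδ' : δ < 1 / 2)
    (τ θ : ℕ → Ω → ℝ)
    (hτmeas : ∀ i, Measurable (τ i)) (hθmeas : ∀ i, Measurable (θ i))
    (hindep : iIndepFun (Sum.elim τ θ) P)
    (hτdist : ∀ i, ∀ t : ℝ, 0 ≤ t →
      P {ω | τ i ω > t} = ENNReal.ofReal (Real.exp (-(2 * β) * t)))
    (hθid : ∀ i j, IdentDistrib (θ i) (θ j) P P)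
    (hθsym : IdentDistrib (θ 1) (fun ω => 1 - θ 1 ω) P P)
    (hθsq : ∫ ω, (θ 1 ω) ^ 2 ∂P < 1)
    (hθcube : ∫ ω, (θ 1 ω) ^ 3 ∂P < 1)
    (hθrange : ∀ i ω, θ i ω ∈ Set.Icc δ (1 - δ))
    (ξ : Ω → ℝ)
    (hξ : ∀ ω, ξ ω = v * ∑' n : ℕ, τ n ω * ∏ i ∈ Finset.range n, θ (i + 1) ω) :
    ∫ ω, (ξ ω) ^ 3 ∂P
      = 3 * v ^ 3 /
        (2 * β ^ 3 * (1 - ∫ ω, (θ 1 ω) ^ 2 ∂P) * (1 - ∫ ω, (θ 1 ω) ^ 3 ∂P)) :=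
  third_moment_of_limiting_mass_general P β v δ hβ hδ τ θ hτmeas hθmeas hindep hτdist hθid hθsym
    hθsq hθcube hθrange ξ hξ
end

section
/- Let ξ = v Σ_{n≥0} τ_n ∏_{i=1}^n θ_i with τ_i i.i.d. Exp(2β) and θ_i i.i.d. supported in [a, 1−a], 0 < a ≤ 1/2, independent of the τ_i. Then there exist constants c₁ > 0 and m₀ > 0 such that for all 0 < m < m₀: P(ξ ≤ m) ≤ exp(−c₁ ln²(1/m)). -/
open MeasureTheory ProbabilityTheory Real

private lemma smb_arith {r L Cl : ℝ} (hr : 0 < r) (hL1 : 0 < L) (hLC : 2 * Cl ≤ L)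
    (hLr : 4 * r ≤ L) :
    (⌈L / (4 * r)⌉₊ : ℝ) * (Cl - L) + ((⌈L / (4 * r)⌉₊ : ℝ) * ((⌈L / (4 * r)⌉₊ : ℝ) - 1)) * r
      ≤ -(L ^ 2 / (16 * r)) := by
  set x := L / (4 * r) with hx
  have hx0 : 0 ≤ x := by positivity
  set N : ℕ := ⌈x⌉₊ with hN
  set n : ℝ := (N : ℝ) with hn
  have h1 : x ≤ n := Nat.le_ceil x
  have h2 : n < x + 1 := Nat.ceil_lt_add_one hx0
  have hn0 : 0 ≤ n := Nat.cast_nonneg N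
  have hxr : x * (4 * r) = L := by
    rw [hx]; field_simp
  have s1 : n * (Cl - L) ≤ n * (-(L / 2)) :=
    mul_le_mul_of_nonneg_left (by linarith) hn0
  have s2 : n * (n - 1) * r ≤ n * (L / 4) := by
    have hb : (n - 1) * r ≤ x * r := mul_le_mul_of_nonneg_right (by linarith) hr.le
    have hxr4 : x * r = L / 4 := by rw [hx]; field_simp
    calc n * (n - 1) * r = n * ((n - 1) * r) := by ring
      _ ≤ n * (x * r) := mul_le_mul_of_nonneg_left (by linarith) hn0
      _ = n * (L / 4) := by rw [hxr4]
  have s3 : x * (L / 4) ≤ n * (L / 4) := mul_le_mul_of_nonneg_right h1 (by linarith)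
  have hxL : x * (L / 4) = L ^ 2 / (16 * r) := by rw [hx]; field_simp; ring
  linarith

/-- Let `ξ = v Σ_{n≥0} τ_n ∏_{i=1}^n θ_i` with `τ_i` i.i.d. `Exp(2β)` and `θ_i` i.i.d.
supported in `[a, 1−a]`, `0 < a ≤ 1/2`, independent of the `τ_i`.  Then there exist
constants `c₁ > 0` and `m₀ > 0` such that for all `0 < m < m₀`:
`P(ξ ≤ m) ≤ exp(−c₁ ln²(1/m))`. -/
theorem small_mass_tail_bound
    {Ω : Type*} [MeasurableSpace Ω] (P : Measure Ω) [IsProbabilityMeasure P]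
    (β v a : ℝ) (hβ : 0 < β) (hv : 0 < v) (ha : 0 < a) (ha' : a ≤ 1 / 2)
    (τ θ : ℕ → Ω → ℝ)
    (hτmeas : ∀ i, Measurable (τ i)) (hθmeas : ∀ i, Measurable (θ i))
    (hindep : iIndepFun (Sum.elim τ θ) P)
    (hτdist : ∀ i, ∀ t : ℝ, 0 ≤ t →
      P {ω | τ i ω > t} = ENNReal.ofReal (Real.exp (-(2 * β) * t)))
    (hθid : ∀ i j, IdentDistrib (θ i) (θ j) P P)
    (hθrange : ∀ i ω, θ i ω ∈ Set.Icc a (1 - a))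
    (ξ : Ω → ℝ)
    (hξ : ∀ ω, ξ ω = v * ∑' n : ℕ, τ n ω * ∏ i ∈ Finset.range n, θ (i + 1) ω) :
    ∃ c₁ > (0 : ℝ), ∃ m₀ > (0 : ℝ), ∀ m : ℝ, 0 < m → m < m₀ →
      P {ω | ξ ω ≤ m} ≤ ENNReal.ofReal (Real.exp (-c₁ * Real.log (1 / m) ^ 2)) := by
  have ha1 : a < 1 := lt_of_le_of_lt ha' (by norm_num)
  have hq0 : (0:ℝ) < 1 - a := by linarith
  have hq1 : 1 - a < 1 := by linarith
  have hθpos : ∀ i ω, 0 < θ i ω := fun i ω => lt_of_lt_of_le ha (hθrange i ω).1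
  set r : ℝ := Real.log (1 / a) with hrdef
  have hr : 0 < r := Real.log_pos (by rw [lt_div_iff₀ ha]; linarith)
  refine ⟨1 / (16 * r), by positivity, ?_⟩
  set Cl : ℝ := Real.log (2 * β / v) with hCldef
  set L₀ : ℝ := max (max 1 (2 * Cl)) (4 * r) with hL0def
  refine ⟨Real.exp (-L₀), Real.exp_pos _, ?_⟩
  intro m hm hmlt
  set L : ℝ := Real.log (1 / m) with hLdef
  have hLeq : L = -Real.log m := by rw [hLdef, Real.log_div one_ne_zero hm.ne', Real.log_one]; ring
  have hLgt : L₀ < L := by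
    have h := Real.log_lt_log hm hmlt
    rw [Real.log_exp] at h
    linarith [hLeq]
  have hL1 : (1:ℝ) < L := lt_of_le_of_lt ((le_max_left 1 (2*Cl)).trans (le_max_left _ _)) hLgt
  have hLC : 2 * Cl ≤ L := le_of_lt (lt_of_le_of_lt ((le_max_right 1 (2*Cl)).trans (le_max_left _ _)) hLgt)
  have hLr : 4 * r ≤ L := le_of_lt (lt_of_le_of_lt (le_max_right _ _) hLgt)
  set n : ℕ := ⌈L / (4 * r)⌉₊ with hndef
  set c : ℕ → ℝ := fun k => m / v * (1 / a) ^ k with hcdef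
  have hc_pos : ∀ k, 0 < c k := fun k => by
    rw [hcdef]; positivity
  -- the possible bad set
  set f : Ω → ℕ → ℝ := fun ω k => τ k ω * ∏ i ∈ Finset.range k, θ (i + 1) ω with hfdef
  set B : Set Ω := {ω | ¬ ((∀ k, 0 ≤ τ k ω) ∧ Summable (f ω))} with hBdef
  have hτ0 : ∀ k, P {ω | τ k ω < 0} = 0 := by
    intro k
    have h0 : P {ω | τ k ω > 0} = 1 := by
      rw [hτdist k 0 le_rfl]; norm_num
    have hms : MeasurableSet {ω | τ k ω > 0} := measurableSet_lt measurable_const (hτmeas k)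
    have hcompl : P {ω | τ k ω > 0}ᶜ = 0 := by
      rw [measure_compl hms (measure_ne_top _ _), h0, measure_univ, tsub_self]
    refine measure_mono_null ?_ hcompl
    intro ω hω
    simp only [Set.mem_compl_iff, Set.mem_setOf_eq, not_lt] at *
    linarith
  have hB : P B = 0 := by
    set A : ℕ → Set Ω := fun k => {ω | τ k ω > (k : ℝ) + 1} with hAdef
    have hAmeas : ∀ k, P (A k) = ENNReal.ofReal (Real.exp (-(2*β) * ((k:ℝ)+1))) := fun k =>
      hτdist k ((k:ℝ)+1) (by positivity)
    have hgeom : Summable (fun k : ℕ => Real.exp (-(2*β) * ((k:ℝ)+1))) := by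
      have heq : ∀ k : ℕ, Real.exp (-(2*β) * ((k:ℝ)+1))
          = Real.exp (-(2*β)) * (Real.exp (-(2*β)))^k := by
        intro k
        rw [← Real.exp_nat_mul, ← Real.exp_add]; ring_nf
      have hlt : Real.exp (-(2*β)) < 1 := Real.exp_lt_one_iff.mpr (by linarith)
      have := (summable_geometric_of_lt_one (Real.exp_nonneg _) hlt).mul_left
        (Real.exp (-(2*β)))
      exact this.congr fun k => (heq k).symm
    have hAsum : (∑' k, P (A k)) ≠ ⊤ := by
      rw [tsum_congr hAmeas, ← ENNReal.ofReal_tsum_of_nonneg (fun k => Real.exp_nonneg _) hgeom]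
      exact ENNReal.ofReal_ne_top
    have hlimsup : P (Filter.limsup A Filter.atTop) = 0 :=
      measure_limsup_atTop_eq_zero hAsum
    have hsub : B ⊆ (⋃ k, {ω | τ k ω < 0}) ∪ Filter.limsup A Filter.atTop := by
      intro ω hω
      rw [hBdef, Set.mem_setOf_eq, not_and_or] at hω
      rcases hω with hω | hω
      · left
        push_neg at hω
        obtain ⟨k, hk⟩ := hω
        exact Set.mem_iUnion.mpr ⟨k, by simpa [not_le] using hk⟩
      · by_cases hpos : ∀ k, 0 ≤ τ k ω
        · right
          rw [Filter.mem_limsup_iff_frequently_mem]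
          by_contra hfreq
          rw [Filter.not_frequently] at hfreq
          apply hω
          -- eventually τ k ω ≤ k + 1
          obtain ⟨N, hN⟩ := Filter.eventually_atTop.mp hfreq
          have hbound : ∀ k, N ≤ k → τ k ω ≤ (k:ℝ) + 1 := by
            intro k hk
            have := hN k hk
            simpa [hAdef, not_lt] using this
          -- comparison series
          have hg : Summable (fun k : ℕ => ((k:ℝ) + 1) * (1 - a)^k) := by
            have h1 : Summable (fun k : ℕ => (k:ℝ) ^ 1 * (1 - a)^k) :=
              summable_pow_mul_geometric_of_norm_lt_one 1
                (by rwa [Real.norm_eq_abs, abs_of_pos hq0])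
            have h2 : Summable (fun k : ℕ => (1 - a)^k) :=
              summable_geometric_of_lt_one hq0.le hq1
            exact (h1.add h2).congr fun k => by ring
          rw [← summable_nat_add_iff N]
          refine Summable.of_nonneg_of_le (fun k => ?_) (fun k => ?_)
            ((summable_nat_add_iff N).mpr hg)
          · exact mul_nonneg (hpos _) (Finset.prod_nonneg fun i _ => (hθpos _ ω).le)
          · have hprod : ∏ i ∈ Finset.range (k + N), θ (i + 1) ω ≤ (1 - a)^(k + N) := by
              calc ∏ i ∈ Finset.range (k + N), θ (i + 1) ω
                  ≤ ∏ _i ∈ Finset.range (k + N), (1 - a) :=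
                    Finset.prod_le_prod (fun i _ => (hθpos _ ω).le) (fun i _ => (hθrange _ ω).2)
                _ = (1 - a)^(k + N) := by rw [Finset.prod_const, Finset.card_range]
            have hτb : τ (k + N) ω ≤ ((k + N : ℕ):ℝ) + 1 := hbound _ (Nat.le_add_left N k)
            calc f ω (k + N) ≤ (((k + N : ℕ):ℝ) + 1) * (1 - a)^(k + N) := by
                  refine mul_le_mul hτb hprod
                    (Finset.prod_nonneg fun i _ => (hθpos _ ω).le) (by positivity)
              _ = (((k + N : ℕ):ℝ) + 1) * (1 - a)^(k + N) := rfl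
        · left
          push_neg at hpos
          obtain ⟨k, hk⟩ := hpos
          exact Set.mem_iUnion.mpr ⟨k, by simpa [not_le] using hk⟩
    refine le_antisymm ?_ zero_le
    calc P B ≤ P ((⋃ k, {ω | τ k ω < 0}) ∪ Filter.limsup A Filter.atTop) := measure_mono hsub
      _ ≤ P (⋃ k, {ω | τ k ω < 0}) + P (Filter.limsup A Filter.atTop) := measure_union_le _ _
      _ = 0 := by rw [measure_iUnion_null hτ0, hlimsup, add_zero]
  -- main containment
  have hsub : {ω | ξ ω ≤ m} ⊆ (⋂ k ∈ Finset.range n, τ k ⁻¹' Set.Iic (c k)) ∪ B := by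
    intro ω hω
    by_cases hG : (∀ k, 0 ≤ τ k ω) ∧ Summable (f ω)
    · left
      obtain ⟨hpos, hsum⟩ := hG
      refine Set.mem_iInter₂.mpr fun k _ => ?_
      have hnn : ∀ j, 0 ≤ f ω j := fun j =>
        mul_nonneg (hpos j) (Finset.prod_nonneg fun i _ => (hθpos _ ω).le)
      have hterm : f ω k ≤ m / v := by
        have h1 : f ω k ≤ ∑' j, f ω j := hsum.le_tsum k fun j _ => hnn j
        have h2 : v * ∑' j, f ω j ≤ m := by
          rw [← hξ ω] at *; exact hω
        have h3 : ∑' j, f ω j ≤ m / v := by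
          rw [le_div_iff₀ hv] at *; linarith
        linarith
      have hprod : a ^ k ≤ ∏ i ∈ Finset.range k, θ (i + 1) ω := by
        calc a ^ k = ∏ _i ∈ Finset.range k, a := by rw [Finset.prod_const, Finset.card_range]
          _ ≤ ∏ i ∈ Finset.range k, θ (i + 1) ω :=
              Finset.prod_le_prod (fun i _ => ha.le) (fun i _ => (hθrange _ ω).1)
      have hτa : τ k ω * a ^ k ≤ m / v := by
        calc τ k ω * a ^ k ≤ τ k ω * ∏ i ∈ Finset.range k, θ (i + 1) ω :=
              mul_le_mul_of_nonneg_left hprod (hpos k)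
          _ ≤ m / v := hterm
      have hak : (0:ℝ) < a ^ k := pow_pos ha k
      have hinv : (1 / a) ^ k * a ^ k = 1 := by
        rw [← mul_pow, one_div, inv_mul_cancel₀ ha.ne', one_pow]
      show τ k ω ∈ Set.Iic (c k)
      rw [Set.mem_Iic, hcdef]
      calc τ k ω = τ k ω * a ^ k * (1 / a) ^ k := by
            rw [mul_assoc, mul_comm (a ^ k), hinv, mul_one]
        _ ≤ m / v * (1 / a) ^ k :=
            mul_le_mul_of_nonneg_right hτa (by positivity)
    · right; exact hG
  -- independence gives the product formula
  have hprodP : P (⋂ k ∈ Finset.range n, τ k ⁻¹' Set.Iic (c k))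
      = ∏ k ∈ Finset.range n, P (τ k ⁻¹' Set.Iic (c k)) := by
    have key := hindep.measure_inter_preimage_eq_mul
      ((Finset.range n).map ⟨Sum.inl, Sum.inl_injective⟩)
      (sets := Sum.elim (fun k : ℕ => Set.Iic (c k)) (fun _ : ℕ => (Set.univ : Set ℝ)))
      (by rintro (k | k) _
          · exact measurableSet_Iic
          · exact MeasurableSet.univ)
    rw [Finset.prod_map] at key
    have hset : (⋂ i ∈ (Finset.range n).map ⟨Sum.inl, Sum.inl_injective⟩,
        Sum.elim τ θ i ⁻¹' Sum.elim (fun k : ℕ => Set.Iic (c k)) (fun _ : ℕ => Set.univ) i)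
        = ⋂ k ∈ Finset.range n, τ k ⁻¹' Set.Iic (c k) := by
      ext ω
      simp only [Set.mem_iInter, Finset.mem_map, Function.Embedding.coeFn_mk]
      constructor
      · intro h k hk
        exact h (Sum.inl k) ⟨k, hk, rfl⟩
      · rintro h i ⟨k, hk, rfl⟩
        exact h k hk
    rw [hset] at key
    rw [key]
    rfl
  -- bound each factor
  have hfac : ∀ k, P (τ k ⁻¹' Set.Iic (c k)) ≤ ENNReal.ofReal (2 * β * c k) := by
    intro k
    have hcompl : τ k ⁻¹' Set.Iic (c k) = {ω | τ k ω > c k}ᶜ := by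
      ext ω; simp [not_lt]
    have hms : MeasurableSet {ω | τ k ω > c k} := measurableSet_lt measurable_const (hτmeas k)
    rw [hcompl, measure_compl hms (measure_ne_top _ _),
      hτdist k (c k) (hc_pos k).le, measure_univ]
    rw [← ENNReal.ofReal_one, ← ENNReal.ofReal_sub _ (Real.exp_nonneg _)]
    refine ENNReal.ofReal_le_ofReal ?_
    have := Real.add_one_le_exp (-(2 * β * c k))
    have heq : -(2*β) * c k = -(2 * β * c k) := by ring
    rw [heq]
    linarith
  -- assemble ENNReal estimates
  have hmain : P {ω | ξ ω ≤ m} ≤ ENNReal.ofReal (∏ k ∈ Finset.range n, (2 * β * c k)) := by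
    calc P {ω | ξ ω ≤ m}
        ≤ P ((⋂ k ∈ Finset.range n, τ k ⁻¹' Set.Iic (c k)) ∪ B) := measure_mono hsub
      _ ≤ P (⋂ k ∈ Finset.range n, τ k ⁻¹' Set.Iic (c k)) + P B := measure_union_le _ _
      _ = P (⋂ k ∈ Finset.range n, τ k ⁻¹' Set.Iic (c k)) := by rw [hB, add_zero]
      _ = ∏ k ∈ Finset.range n, P (τ k ⁻¹' Set.Iic (c k)) := hprodP
      _ ≤ ∏ k ∈ Finset.range n, ENNReal.ofReal (2 * β * c k) :=
            Finset.prod_le_prod' fun k _ => hfac k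
      _ = ENNReal.ofReal (∏ k ∈ Finset.range n, (2 * β * c k)) :=
            (ENNReal.ofReal_prod_of_nonneg fun k _ => by positivity).symm
  refine hmain.trans (ENNReal.ofReal_le_ofReal ?_)
  -- final real inequality
  have hCpos : (0:ℝ) < 2 * β * m / v := by positivity
  have hfactor : ∀ k, 2 * β * c k = (2 * β / v * m) * (1 / a) ^ k := by
    intro k; rw [hcdef]; ring
  have hprodpos : (0:ℝ) < ∏ k ∈ Finset.range n, (2 * β * c k) :=
    Finset.prod_pos fun k _ => by rw [hfactor]; positivity
  rw [← Real.log_le_iff_le_exp hprodpos]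
  rw [Real.log_prod (fun k _ => (by rw [hfactor]; positivity : (0:ℝ) < 2 * β * c k).ne')]
  have hlog : ∀ k, Real.log (2 * β * c k) = (Cl - L) + (k : ℝ) * r := by
    intro k
    rw [hfactor, Real.log_mul (by positivity) (by positivity), Real.log_mul (by positivity) hm.ne',
      Real.log_pow, hLeq]
    rw [hCldef, hrdef]
    push_cast
    ring
  rw [Finset.sum_congr rfl fun k _ => hlog k]
  rw [Finset.sum_add_distrib, Finset.sum_const, Finset.card_range, nsmul_eq_mul]
  have hsumk : ∑ k ∈ Finset.range n, (k : ℝ) * r ≤ ((n:ℝ) * ((n:ℝ) - 1)) * r := by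
    have h1 : ∑ k ∈ Finset.range n, (k : ℝ) ≤ (n : ℝ) * ((n:ℝ) - 1) := by
      calc ∑ k ∈ Finset.range n, (k : ℝ) ≤ ∑ k ∈ Finset.range n, ((n:ℝ) - 1) := by
            refine Finset.sum_le_sum fun k hk => ?_
            have : k + 1 ≤ n := Finset.mem_range.mp hk
            have : (k:ℝ) + 1 ≤ (n:ℝ) := by exact_mod_cast this
            linarith
        _ = (n : ℝ) * ((n:ℝ) - 1) := by rw [Finset.sum_const, Finset.card_range, nsmul_eq_mul]
    rw [← Finset.sum_mul]
    exact mul_le_mul_of_nonneg_right h1 hr.le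
  have harith := smb_arith hr (by linarith : (0:ℝ) < L) hLC hLr
  have hfin : -(L ^ 2 / (16 * r)) = -(1 / (16 * r)) * L ^ 2 := by ring
  rw [hndef]
  calc (⌈L / (4*r)⌉₊ : ℝ) * (Cl - L) + ∑ k ∈ Finset.range ⌈L / (4*r)⌉₊, (k:ℝ) * r
      ≤ (⌈L / (4*r)⌉₊ : ℝ) * (Cl - L)
        + ((⌈L / (4*r)⌉₊:ℝ) * ((⌈L / (4*r)⌉₊:ℝ) - 1)) * r := by
        have := hsumk
        rw [hndef] at this
        linarith
    _ ≤ -(L ^ 2 / (16 * r)) := harith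
    _ = -(1 / (16 * r)) * L ^ 2 := hfin
end
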